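/- For the default theory with W = {a, b} and D = {(a:¬b)/¬b, (b:¬a)/¬a, (:a∧b)/(a∧b)} in Reiter default logic: ⟨D,W⟩ has the unique extension Cn({a,b}); ⟨D, W\{b}⟩ has extensions Cn({a,b}) and Cn({a,¬b}); ⟨D, W\{a}⟩ has extensions Cn({a,b}) and Cn({¬a,b}); and ⟨D, ∅⟩ has the unique extension Cn({a∧b}). Hence both clauses a and b are irredundant in {a,b} w.r.t. extension-equivalence, yet the formula {a,b} is redundant. -/

import Mathlib

/-- A propositional clause: sets of positively and negatively occurring variables. -/
structure Clause (V : Type) where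
  pos : Set V
  neg : Set V

/-- A model (set of variables assigned true) satisfies a clause. -/
def Clause.sat {V : Type} (M : Set V) (c : Clause V) : Prop :=
  (∃ x ∈ c.pos, x ∈ M) ∨ (∃ x ∈ c.neg, x ∉ M)

/-- Models of a CNF formula (set of clauses). -/
def ModOf {V : Type} (F : Set (Clause V)) : Set (Set V) :=
  {M | ∀ c ∈ F, c.sat M}

/-- Minimal models of a formula, w.r.t. set inclusion. -/
def CIRC {V : Type} (F : Set (Clause V)) : Set (Set V) :=
  {M | M ∈ ModOf F ∧ ¬ ∃ M' ∈ ModOf F, M' ⊂ M}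

/-- A default rule, represented semantically: precondition, justification and
consequence are given by their sets of models. -/
structure Default (V : Type) where
  prec : Set (Set V)
  just : Set (Set V)
  cons : Set (Set V)

/-- Models of the conjunction of the consequences of a sequence of defaults. -/
def consSet {V : Type} (p : List (Default V)) : Set (Set V) :=
  {M | ∀ d ∈ p, M ∈ d.cons}

/-- Models of the conjunction of the justifications of a sequence of defaults. -/
def justSet {V : Type} (p : List (Default V)) : Set (Set V) :=
  {M | ∀ d ∈ p, M ∈ d.just}

/-- A process of ⟨D,W⟩: a duplicate-free sequence of defaults of D such that the
precondition of each default is entailed by W together with the consequences of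
the preceding defaults. -/
def IsProcess {V : Type} (D : Set (Default V)) (W : Set (Clause V))
    (p : List (Default V)) : Prop :=
  p.Nodup ∧ (∀ d ∈ p, d ∈ D) ∧
  ∀ (i : ℕ) (h : i < p.length),
    ModOf W ∩ consSet (p.take i) ⊆ (p.get ⟨i, h⟩).prec

/-- Success: W ∪ cons(p) is consistent with the justification of each default of p. -/
def Successful {V : Type} (W : Set (Clause V)) (p : List (Default V)) : Prop :=
  ∀ d ∈ p, (ModOf W ∩ consSet p ∩ d.just).Nonempty

/-- Local applicability of a default in a process. -/
def LocallyApplicable {V : Type} (W : Set (Clause V)) (p : List (Default V))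
    (d : Default V) : Prop :=
  ModOf W ∩ consSet p ⊆ d.prec ∧ (ModOf W ∩ consSet p ∩ d.just).Nonempty

/-- Reiter semantics: selected processes. -/
def ReiterSelected {V : Type} (D : Set (Default V)) (W : Set (Clause V))
    (p : List (Default V)) : Prop :=
  IsProcess D W p ∧ Successful W p ∧
  ∀ d ∈ D, d ∉ p → ¬ LocallyApplicable W p d

/-- Extensions (as sets of models, i.e. up to logical equivalence) in Reiter semantics. -/
def ReiterExtensions {V : Type} (D : Set (Default V)) (W : Set (Clause V)) :
    Set (Set (Set V)) :=
  {E | ∃ p, ReiterSelected D W p ∧ E = ModOf W ∩ consSet p}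

/-- The default (a:¬b)/¬b; variables a = 0, b = 1 : Fin 2. -/
def d1 : Default (Fin 2) := ⟨{M | 0 ∈ M}, {M | 1 ∉ M}, {M | 1 ∉ M}⟩
/-- The default (b:¬a)/¬a. -/
def d2 : Default (Fin 2) := ⟨{M | 1 ∈ M}, {M | 0 ∉ M}, {M | 0 ∉ M}⟩
/-- The default (:a∧b)/(a∧b). -/
def d3 : Default (Fin 2) :=
  ⟨Set.univ, {M | 0 ∈ M ∧ 1 ∈ M}, {M | 0 ∈ M ∧ 1 ∈ M}⟩
/-- The unit clause a. -/
def ca : Clause (Fin 2) := ⟨{0}, ∅⟩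
/-- The unit clause b. -/
def cb : Clause (Fin 2) := ⟨{1}, ∅⟩


/-!
Every selected process here consists of a single default. The consequent `a ∧ b` of `d3` refutes
the justifications `¬b`, `¬a` of `d1`, `d2`, and conversely; the fact `a` refutes the justification
of `d2`, the fact `b` that of `d1`. With both facts only `[d3]` is selected. With the single fact
`a`, the process `[d1]` is selected as well (it blocks `d3`), giving the new extension `a ∧ ¬b`;
symmetrically for `b`. With no facts, `d1` and `d2` have underivable prerequisites, so `[d3]` is
again the only selected process and the extensions of `{a, b}` are recovered.
-/

open Set

lemma List.Nodup.eq_singleton_of_forall_eq {α : Type*} {l : List α} {x : α} (hl : l.Nodup)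
    (hne : l ≠ []) (hx : ∀ y ∈ l, y = x) : l = [x] := by
  have hrep : l = List.replicate l.length x := List.eq_replicate_iff.2 ⟨rfl, hx⟩
  have hlen : l.length ≤ 1 := List.nodup_replicate.1 (hrep ▸ hl)
  have hpos : 0 < l.length := List.length_pos_iff.2 hne
  rw [hrep, show l.length = 1 by omega, List.replicate_one]

lemma Set.pair_ne_singleton {α : Type*} {a b : α} (h : b ≠ a) : ({a, b} : Set α) ≠ {a} :=
  fun hs => h (mem_singleton_iff.1 (hs ▸ mem_insert_of_mem a rfl))

section Reiter

variable {V : Type} {D : Set (Default V)} {W : Set (Clause V)} {p : List (Default V)}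
  {d e : Default V}

lemma modOf_anti {F G : Set (Clause V)} (h : F ⊆ G) : ModOf G ⊆ ModOf F :=
  fun _ hM c hc => hM c (h hc)

@[simp]
lemma consSet_nil : consSet ([] : List (Default V)) = univ := by
  simp [consSet]

@[simp]
lemma consSet_singleton : consSet [d] = d.cons := by
  simp [consSet]

lemma consSet_subset_cons (he : e ∈ p) : consSet p ⊆ e.cons :=
  fun _ hM => hM e he

lemma isProcess_singleton (hd : d ∈ D) (hprec : ModOf W ⊆ d.prec) : IsProcess D W [d] := by
  refine ⟨List.nodup_singleton d, by simpa using hd, fun i hi => ?_⟩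
  obtain rfl : i = 0 := by simpa using hi
  exact fun M hM => hprec hM.1

lemma IsProcess.modOf_subset_prec_head (h : IsProcess D W (d :: p)) : ModOf W ⊆ d.prec := by
  simpa using h.2.2 0 (by simp)

lemma Successful.not_disjoint (h : Successful W p) (hd : d ∈ p) (he : e ∈ p) :
    ¬ Disjoint (ModOf W ∩ e.cons) d.just := by
  obtain ⟨M, ⟨hW, hp⟩, hj⟩ := h d hd
  exact Set.not_disjoint_iff.2 ⟨M, ⟨hW, consSet_subset_cons he hp⟩, hj⟩

lemma not_locallyApplicable_of_disjoint (he : e ∈ p) (h : Disjoint (ModOf W ∩ e.cons) d.just) :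
    ¬ LocallyApplicable W p d := fun ⟨_, hne⟩ =>
  Set.not_disjoint_iff_nonempty_inter.2 hne
    (h.mono_left (inter_subset_inter_right _ (consSet_subset_cons he)))

lemma ReiterSelected.mem_of_locallyApplicable (h : ReiterSelected D W p) (hd : d ∈ D)
    (ha : LocallyApplicable W p d) : d ∈ p := by
  by_contra hdp
  exact h.2.2 d hd hdp ha

lemma reiterSelected_singleton (hd : d ∈ D) (hprec : ModOf W ⊆ d.prec)
    (hjust : (ModOf W ∩ d.cons ∩ d.just).Nonempty)
    (hblock : ∀ e ∈ D, e ≠ d → Disjoint (ModOf W ∩ d.cons) e.just) :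
    ReiterSelected D W [d] := by
  refine ⟨isProcess_singleton hd hprec, ?_, fun e he hep => ?_⟩
  · simpa [Successful] using hjust
  · exact not_locallyApplicable_of_disjoint (List.mem_singleton_self d)
      (hblock e he (by simpa using hep))

lemma reiterExtensions_eq_image :
    ReiterExtensions D W = (fun p => ModOf W ∩ consSet p) '' {p | ReiterSelected D W p} := by
  ext E
  simp only [ReiterExtensions, mem_image, mem_ofPred_eq, eq_comm]

end Reiter

lemma ca_ne_cb : ca ≠ cb := by
  simp [ca, cb]

lemma modOf_ca_cb : ModOf {ca, cb} = {M : Set (Fin 2) | 0 ∈ M ∧ 1 ∈ M} := by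
  ext M; simp [ModOf, Clause.sat, ca, cb]

lemma modOf_ca : ModOf {ca} = {M : Set (Fin 2) | 0 ∈ M} := by
  ext M; simp [ModOf, Clause.sat, ca]

lemma modOf_cb : ModOf {cb} = {M : Set (Fin 2) | 1 ∈ M} := by
  ext M; simp [ModOf, Clause.sat, cb]

lemma modOf_empty : ModOf (∅ : Set (Clause (Fin 2))) = univ := by
  ext M; simp [ModOf]

lemma disjoint_modOf_ca_d2_just : Disjoint (ModOf {ca}) d2.just := by
  rw [modOf_ca]; exact Set.disjoint_left.2 fun _ h0 hj => hj h0

lemma disjoint_modOf_cb_d1_just : Disjoint (ModOf {cb}) d1.just := by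
  rw [modOf_cb]; exact Set.disjoint_left.2 fun _ h1 hj => hj h1

lemma disjoint_d3_cons_d1_just : Disjoint d3.cons d1.just :=
  Set.disjoint_left.2 fun _ h hj => hj h.2

lemma disjoint_d3_cons_d2_just : Disjoint d3.cons d2.just :=
  Set.disjoint_left.2 fun _ h hj => hj h.1

lemma disjoint_d1_cons_d3_just : Disjoint d1.cons d3.just :=
  Set.disjoint_left.2 fun _ h hj => h hj.2

lemma disjoint_d2_cons_d3_just : Disjoint d2.cons d3.just :=
  Set.disjoint_left.2 fun _ h hj => h hj.1

section Example

variable {W : Set (Clause (Fin 2))} {p : List (Default (Fin 2))}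

lemma mem_defaults {d : Default (Fin 2)} :
    d ∈ ({d1, d2, d3} : Set (Default (Fin 2))) ↔ d = d1 ∨ d = d2 ∨ d = d3 := by
  simp

lemma ReiterSelected.ne_nil (h : ReiterSelected {d1, d2, d3} W p) (hW : univ ∈ ModOf W) :
    p ≠ [] := by
  rintro rfl
  have happ : LocallyApplicable W [] d3 :=
    ⟨fun _ _ => mem_univ _, ⟨univ, ⟨hW, by simp⟩, by simp [d3]⟩⟩
  simpa using h.mem_of_locallyApplicable (by simp) happ

lemma ReiterSelected.eq_d3_of_mem (h : ReiterSelected {d1, d2, d3} W p) (h3 : d3 ∈ p) :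
    p = [d3] := by
  refine h.1.1.eq_singleton_of_forall_eq (List.ne_nil_of_mem h3) fun d hd => ?_
  rcases mem_defaults.1 (h.1.2.1 d hd) with rfl | rfl | rfl
  · exact absurd (disjoint_d3_cons_d1_just.mono_left inter_subset_right)
      (h.2.1.not_disjoint hd h3)
  · exact absurd (disjoint_d3_cons_d2_just.mono_left inter_subset_right)
      (h.2.1.not_disjoint hd h3)
  · rfl

lemma reiterSelected_d3 (hW : univ ∈ ModOf W) : ReiterSelected {d1, d2, d3} W [d3] := by
  refine reiterSelected_singleton (by simp) (fun _ _ => mem_univ _)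
    ⟨univ, ⟨hW, by simp [d3]⟩, by simp [d3]⟩ ?_
  rintro e (rfl | rfl | rfl) hne
  · exact disjoint_d3_cons_d1_just.mono_left inter_subset_right
  · exact disjoint_d3_cons_d2_just.mono_left inter_subset_right
  · exact absurd rfl hne

lemma reiterSelected_ca_cb_iff :
    ReiterSelected {d1, d2, d3} {ca, cb} p ↔ p = [d3] := by
  have hW : univ ∈ ModOf {ca, cb} := by simp [modOf_ca_cb]
  refine ⟨fun h => ?_, fun h => h ▸ reiterSelected_d3 hW⟩
  refine h.1.1.eq_singleton_of_forall_eq (h.ne_nil hW) fun d hd => ?_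
  rcases mem_defaults.1 (h.1.2.1 d hd) with rfl | rfl | rfl
  · exact absurd ((disjoint_modOf_cb_d1_just.mono_left (modOf_anti (by simp))).mono_left
      inter_subset_left) (h.2.1.not_disjoint hd hd)
  · exact absurd ((disjoint_modOf_ca_d2_just.mono_left (modOf_anti (by simp))).mono_left
      inter_subset_left) (h.2.1.not_disjoint hd hd)
  · rfl

lemma reiterSelected_ca_iff :
    ReiterSelected {d1, d2, d3} {ca} p ↔ p = [d3] ∨ p = [d1] := by
  have hW : univ ∈ ModOf {ca} := by simp [modOf_ca]
  constructor
  · intro h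
    by_cases h3 : d3 ∈ p
    · exact Or.inl (h.eq_d3_of_mem h3)
    refine Or.inr (h.1.1.eq_singleton_of_forall_eq (h.ne_nil hW) fun d hd => ?_)
    rcases mem_defaults.1 (h.1.2.1 d hd) with rfl | rfl | rfl
    · rfl
    · exact absurd (disjoint_modOf_ca_d2_just.mono_left inter_subset_left)
        (h.2.1.not_disjoint hd hd)
    · exact absurd hd h3
  · rintro (rfl | rfl)
    · exact reiterSelected_d3 hW
    · refine reiterSelected_singleton (by simp) (by simp [modOf_ca, d1])
        ⟨{0}, ⟨by simp [modOf_ca], by simp [d1]⟩, by simp [d1]⟩ ?_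
      rintro e (rfl | rfl | rfl) hne
      · exact absurd rfl hne
      · exact disjoint_modOf_ca_d2_just.mono_left inter_subset_left
      · exact disjoint_d1_cons_d3_just.mono_left inter_subset_right

lemma reiterSelected_cb_iff :
    ReiterSelected {d1, d2, d3} {cb} p ↔ p = [d3] ∨ p = [d2] := by
  have hW : univ ∈ ModOf {cb} := by simp [modOf_cb]
  constructor
  · intro h
    by_cases h3 : d3 ∈ p
    · exact Or.inl (h.eq_d3_of_mem h3)
    refine Or.inr (h.1.1.eq_singleton_of_forall_eq (h.ne_nil hW) fun d hd => ?_)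
    rcases mem_defaults.1 (h.1.2.1 d hd) with rfl | rfl | rfl
    · exact absurd (disjoint_modOf_cb_d1_just.mono_left inter_subset_left)
        (h.2.1.not_disjoint hd hd)
    · rfl
    · exact absurd hd h3
  · rintro (rfl | rfl)
    · exact reiterSelected_d3 hW
    · refine reiterSelected_singleton (by simp) (by simp [modOf_cb, d2])
        ⟨{1}, ⟨by simp [modOf_cb], by simp [d2]⟩, by simp [d2]⟩ ?_
      rintro e (rfl | rfl | rfl) hne
      · exact disjoint_modOf_cb_d1_just.mono_left inter_subset_left
      · exact absurd rfl hne
      · exact disjoint_d2_cons_d3_just.mono_left inter_subset_right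

lemma reiterSelected_empty_iff :
    ReiterSelected {d1, d2, d3} ∅ p ↔ p = [d3] := by
  have hW : univ ∈ ModOf (∅ : Set (Clause (Fin 2))) := by simp [modOf_empty]
  refine ⟨fun h => ?_, fun h => h ▸ reiterSelected_d3 hW⟩
  obtain ⟨d, q, rfl⟩ := List.exists_cons_of_ne_nil (h.ne_nil hW)
  have hprec : ∅ ∈ d.prec := h.1.modOf_subset_prec_head (by simp [modOf_empty])
  rcases mem_defaults.1 (h.1.2.1 d (by simp)) with rfl | rfl | rfl
  · simp [d1] at hprec
  · simp [d2] at hprec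
  · exact h.eq_d3_of_mem (by simp)

lemma modOf_inter_d3_cons (hW : d3.cons ⊆ ModOf W) :
    ModOf W ∩ d3.cons = {M | 0 ∈ M ∧ 1 ∈ M} :=
  inter_eq_right.2 hW

end Example

theorem reiterExtensions_ca_cb :
    ReiterExtensions {d1, d2, d3} {ca, cb} = { {M | 0 ∈ M ∧ 1 ∈ M} } := by
  have hsel : {p | ReiterSelected {d1, d2, d3} {ca, cb} p} = {[d3]} :=
    Set.ext fun _ => reiterSelected_ca_cb_iff
  rw [reiterExtensions_eq_image, hsel, image_singleton, consSet_singleton,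
    modOf_inter_d3_cons (by rw [modOf_ca_cb]; exact fun _ h => h)]

theorem reiterExtensions_ca :
    ReiterExtensions {d1, d2, d3} {ca} = { {M | 0 ∈ M ∧ 1 ∈ M}, {M | 0 ∈ M ∧ 1 ∉ M} } := by
  have hsel : {p | ReiterSelected {d1, d2, d3} {ca} p} = {[d3], [d1]} :=
    Set.ext fun _ => reiterSelected_ca_iff
  rw [reiterExtensions_eq_image, hsel, image_pair, consSet_singleton, consSet_singleton,
    modOf_inter_d3_cons (by rw [modOf_ca]; exact fun _ h => h.1), modOf_ca]
  rfl

theorem reiterExtensions_cb :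
    ReiterExtensions {d1, d2, d3} {cb} = { {M | 0 ∈ M ∧ 1 ∈ M}, {M | 0 ∉ M ∧ 1 ∈ M} } := by
  have hsel : {p | ReiterSelected {d1, d2, d3} {cb} p} = {[d3], [d2]} :=
    Set.ext fun _ => reiterSelected_cb_iff
  rw [reiterExtensions_eq_image, hsel, image_pair, consSet_singleton, consSet_singleton,
    modOf_inter_d3_cons (by rw [modOf_cb]; exact fun _ h => h.2), modOf_cb, inter_comm]
  rfl

theorem reiterExtensions_empty :
    ReiterExtensions {d1, d2, d3} ∅ = { {M | 0 ∈ M ∧ 1 ∈ M} } := by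
  have hsel : {p | ReiterSelected {d1, d2, d3} ∅ p} = {[d3]} :=
    Set.ext fun _ => reiterSelected_empty_iff
  rw [reiterExtensions_eq_image, hsel, image_singleton, consSet_singleton,
    modOf_inter_d3_cons (by rw [modOf_empty]; exact subset_univ _)]

/-- Both clauses of W = {a,b} are irredundant but W itself is redundant:
default logic lacks the local redundancy property. -/
theorem no_local_redundancy :
    ReiterExtensions {d1, d2, d3} ({ca, cb} : Set (Clause (Fin 2)))
      = { {M | 0 ∈ M ∧ 1 ∈ M} } ∧
    ReiterExtensions {d1, d2, d3} ({ca} : Set (Clause (Fin 2)))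
      = { {M | 0 ∈ M ∧ 1 ∈ M}, {M | 0 ∈ M ∧ 1 ∉ M} } ∧
    ReiterExtensions {d1, d2, d3} ({cb} : Set (Clause (Fin 2)))
      = { {M | 0 ∈ M ∧ 1 ∈ M}, {M | 0 ∉ M ∧ 1 ∈ M} } ∧
    ReiterExtensions {d1, d2, d3} (∅ : Set (Clause (Fin 2)))
      = { {M | 0 ∈ M ∧ 1 ∈ M} } ∧
    (∀ γ ∈ ({ca, cb} : Set (Clause (Fin 2))),
      ReiterExtensions {d1, d2, d3} (({ca, cb} : Set (Clause (Fin 2))) \ {γ})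
        ≠ ReiterExtensions {d1, d2, d3} ({ca, cb} : Set (Clause (Fin 2)))) ∧
    (∃ W' ⊂ ({ca, cb} : Set (Clause (Fin 2))),
      ReiterExtensions {d1, d2, d3} W'
        = ReiterExtensions {d1, d2, d3} ({ca, cb} : Set (Clause (Fin 2)))) := by
  refine ⟨reiterExtensions_ca_cb, reiterExtensions_ca, reiterExtensions_cb, reiterExtensions_empty,
    ?_, ∅, empty_ssubset.2 (insert_nonempty _ _),
    by rw [reiterExtensions_empty, reiterExtensions_ca_cb]⟩
  rintro γ (rfl | rfl)
  · rw [pair_sdiff_left ca_ne_cb, reiterExtensions_cb, reiterExtensions_ca_cb]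
    exact pair_ne_singleton (ne_of_mem_of_not_mem' (a := univ) (by simp) (by simp)).symm
  · rw [pair_sdiff_right ca_ne_cb, reiterExtensions_ca, reiterExtensions_ca_cb]
    exact pair_ne_singleton (ne_of_mem_of_not_mem' (a := univ) (by simp) (by simp)).symm
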